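/- Let X = {(x,y) ∈ R² : xy = 0} with the diffeology generated by the two axis inclusions α and β. Then Ω^k(X) = 0 for k ≥ 2; Ω^0(X) is isomorphic to the space of pairs (F,G) of smooth functions R → R with F(0) = G(0); and Ω^1(X) is isomorphic to Ω^1(R) ⊕ Ω^1(R). -/

import Mathlib

open Set Function

set_option synthInstance.maxHeartbeats 1000000
set_option maxHeartbeats 1000000

noncomputable section

/-- A diffeology on a set `X`: a family of parametrizations (total maps recorded together
with an open domain in some `ℝ^n`) containing the constant parametrizations, closed under
precomposition with smooth maps between Euclidean domains, local, and depending only on the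
values on the domain. -/
structure Diffeology' (X : Type*) where
  IsPlot : ∀ ⦃n : ℕ⦄, Set (Fin n → ℝ) → ((Fin n → ℝ) → X) → Prop
  isOpen_dom : ∀ {n : ℕ} {U : Set (Fin n → ℝ)} {f : (Fin n → ℝ) → X}, IsPlot U f → IsOpen U
  const_plot : ∀ {n : ℕ} {U : Set (Fin n → ℝ)}, IsOpen U → ∀ x : X, IsPlot U fun _ => x
  congr_plot : ∀ {n : ℕ} {U : Set (Fin n → ℝ)} {f g : (Fin n → ℝ) → X},
      IsPlot U f → Set.EqOn f g U → IsPlot U g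
  locality : ∀ {n : ℕ} {U : Set (Fin n → ℝ)} {f : (Fin n → ℝ) → X}, IsOpen U →
      (∀ x ∈ U, ∃ V : Set (Fin n → ℝ), V ⊆ U ∧ IsOpen V ∧ x ∈ V ∧ IsPlot V f) → IsPlot U f
  precomp : ∀ {m n : ℕ} {U : Set (Fin n → ℝ)} {f : (Fin n → ℝ) → X}, IsPlot U f →
      ∀ {V : Set (Fin m → ℝ)} {h : (Fin m → ℝ) → (Fin n → ℝ)}, IsOpen V →
        ContDiffOn ℝ (⊤ : ℕ∞) h V → Set.MapsTo h V U → IsPlot V (f ∘ h)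

variable {X Y Z : Type*}

/-- A map between diffeological spaces is differentiable (smooth) if it sends plots to plots. -/
def Diffeology'.Smooth (DX : Diffeology' X) (DY : Diffeology' Y) (F : X → Y) : Prop :=
  ∀ ⦃n : ℕ⦄ (U : Set (Fin n → ℝ)) (f : (Fin n → ℝ) → X), DX.IsPlot U f → DY.IsPlot U (F ∘ f)

/-- The subspace diffeology on a subset of a diffeological space. -/
def Diffeology'.subspace (D : Diffeology' X) (S : Set X) : Diffeology' S where
  IsPlot _ U f := D.IsPlot U fun x => (f x : X)
  isOpen_dom h := D.isOpen_dom h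
  const_plot hU y := D.const_plot hU (y : X)
  congr_plot h hfg := D.congr_plot h fun x hx => congrArg Subtype.val (hfg hx)
  locality hU h := D.locality hU fun x hx => by
    obtain ⟨V, h1, h2, h3, h4⟩ := h x hx
    exact ⟨V, h1, h2, h3, h4⟩
  precomp := fun {m n U f} hf {V h} hV hh hmap => D.precomp hf hV hh hmap

/-- The usual ("standard") diffeology on a normed space: plots are the smooth maps. -/
def euclDiffeology (E : Type*) [NormedAddCommGroup E] [NormedSpace ℝ E] : Diffeology' E where
  IsPlot _ U f := IsOpen U ∧ ContDiffOn ℝ (⊤ : ℕ∞) f U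
  isOpen_dom h := h.1
  const_plot hU x := ⟨hU, contDiffOn_const⟩
  congr_plot h hfg := ⟨h.1, h.2.congr fun x hx => (hfg hx).symm⟩
  locality hU h := ⟨hU, fun x hx => by
    obtain ⟨V, hVU, hVo, hxV, _, hf⟩ := h x hx
    exact ((hf x hxV).contDiffAt (hVo.mem_nhds hxV)).contDiffWithinAt⟩
  precomp := fun {m n U f} hf {V h} hV hh hmap => ⟨hV, hf.2.comp hh hmap⟩

/-- A family of parametrizations on `X` (with their domains). -/
abbrev ParamFamily (X : Type*) := ∀ ⦃n : ℕ⦄, Set (Fin n → ℝ) → ((Fin n → ℝ) → X) → Prop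

/-- A diffeology contains a family of parametrizations. -/
def Diffeology'.Contains (D : Diffeology' X) (F : ParamFamily X) : Prop :=
  ∀ ⦃n : ℕ⦄ (U : Set (Fin n → ℝ)) (f : (Fin n → ℝ) → X), F U f → D.IsPlot U f

/-- Membership in the diffeology `⟨F⟩` generated by the family `F`, i.e. in the
intersection of all diffeologies containing `F`. -/
def InGenerated (F : ParamFamily X) {n : ℕ} (U : Set (Fin n → ℝ))
    (f : (Fin n → ℝ) → X) : Prop :=
  ∀ D : Diffeology' X, D.Contains F → D.IsPlot U f

/-- `f` is locally constant on `U`. -/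
def IsLocallyConstantOn {n : ℕ} (f : (Fin n → ℝ) → X) (U : Set (Fin n → ℝ)) : Prop :=
  ∀ x ∈ U, ∃ V : Set (Fin n → ℝ), IsOpen V ∧ x ∈ V ∧ V ⊆ U ∧ ∀ y ∈ V, f y = f x

/-- `D` is generated by the two plots `(U, α)` and `(V, β)`
(together with the locally constant parametrizations, which lie in every diffeology):
it contains both and is the smallest such diffeology. -/
def Diffeology'.IsGeneratedBy₂ (D : Diffeology' X) {m n : ℕ}
    (U : Set (Fin m → ℝ)) (α : (Fin m → ℝ) → X)
    (V : Set (Fin n → ℝ)) (β : (Fin n → ℝ) → X) : Prop :=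
  D.IsPlot U α ∧ D.IsPlot V β ∧
    ∀ D' : Diffeology' X, D'.IsPlot U α → D'.IsPlot V β →
      ∀ ⦃k : ℕ⦄ (W : Set (Fin k → ℝ)) (g : (Fin k → ℝ) → X), D.IsPlot W g → D'.IsPlot W g

/-- The pullback (fibered product) of two parametrizations, as a subset of the product. -/
def pbSet {m n : ℕ} (U : Set (Fin m → ℝ)) (α : (Fin m → ℝ) → X)
    (V : Set (Fin n → ℝ)) (β : (Fin n → ℝ) → X) : Set ((Fin m → ℝ) × (Fin n → ℝ)) :=
  {p | p.1 ∈ U ∧ p.2 ∈ V ∧ α p.1 = β p.2}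

/-- The diffeology of the pullback `P` of two plots: the subspace diffeology inside the
product of the two Euclidean domains with their usual diffeology. -/
def pbDiffeology {m n : ℕ} (U : Set (Fin m → ℝ)) (α : (Fin m → ℝ) → X)
    (V : Set (Fin n → ℝ)) (β : (Fin n → ℝ) → X) : Diffeology' (pbSet U α V β) :=
  (euclDiffeology ((Fin m → ℝ) × (Fin n → ℝ))).subspace (pbSet U α V β)

/-! ### Ordinary differential forms on Euclidean domains -/

/-- "Raw" `k`-forms on (an open subset of) `ℝ^n`: multilinear-map--valued functions.
Genuine forms are additionally required (as hypotheses below) to be pointwise alternating. -/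
abbrev RawForm (n k : ℕ) := (Fin n → ℝ) → ((Fin n → ℝ) [×k]→L[ℝ] ℝ)

/-- Pointwise alternation of a raw form. -/
def IsAlternating {n k : ℕ} (ω : RawForm n k) : Prop :=
  ∀ (x : Fin n → ℝ) (v : Fin k → (Fin n → ℝ)) (i j : Fin k), v i = v j → i ≠ j → ω x v = 0

/-- The pullback `h*ω` of a raw form along a map `h` (meaningful where `h` is differentiable). -/
def pullbackForm {m n k : ℕ} (h : (Fin m → ℝ) → (Fin n → ℝ)) (ω : RawForm n k) : RawForm m k :=
  fun x => (ω (h x)).compContinuousLinearMap fun _ => fderiv ℝ h x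

/-- Normalize a raw form to vanish outside the domain `U`. -/
def killOn {n k : ℕ} (U : Set (Fin n → ℝ)) (ω : RawForm n k) : RawForm n k :=
  U.indicator ω

/-- The exterior derivative of a raw form: the alternatization (without the `1/(k+1)!`
normalization, which does not affect any of the statements) of its derivative. -/
def rawExtDeriv {n k : ℕ} (ω : RawForm n k) : RawForm n (k + 1) :=
  fun x => ∑ σ : Equiv.Perm (Fin (k + 1)),
    (Equiv.Perm.sign σ : ℤ) •
      (ContinuousMultilinearMap.domDomCongr σ ((fderiv ℝ ω x).uncurryLeft))

/-- Smooth (everywhere-defined) ordinary `k`-forms on `ℝ^n`, as a submodule of raw forms. -/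
def smoothForms (n k : ℕ) : Submodule ℝ (RawForm n k) where
  carrier := {ω | ContDiff ℝ (⊤ : ℕ∞) ω ∧ IsAlternating ω}
  add_mem' := by
    rintro a b ⟨ha1, ha2⟩ ⟨hb1, hb2⟩
    refine ⟨ha1.add hb1, fun x v i j hv hij => ?_⟩
    have h : (a + b) x v = a x v + b x v := rfl
    rw [h, ha2 x v i j hv hij, hb2 x v i j hv hij, add_zero]
  zero_mem' := ⟨contDiff_const, fun _ _ _ _ _ _ => rfl⟩
  smul_mem' := by
    rintro c a ⟨ha1, ha2⟩
    refine ⟨ha1.const_smul c, fun x v i j hv hij => ?_⟩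
    have h : (c • a) x v = c • (a x v) := rfl
    rw [h, ha2 x v i j hv hij, smul_zero]

lemma pullbackForm_add {m n k : ℕ} (h : (Fin m → ℝ) → (Fin n → ℝ)) (a b : RawForm n k) :
    pullbackForm h (a + b) = pullbackForm h a + pullbackForm h b := by
  funext x; exact ContinuousMultilinearMap.ext fun v => rfl

lemma pullbackForm_smul {m n k : ℕ} (h : (Fin m → ℝ) → (Fin n → ℝ)) (c : ℝ)
    (a : RawForm n k) : pullbackForm h (c • a) = c • pullbackForm h a := by
  funext x; exact ContinuousMultilinearMap.ext fun v => rfl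

lemma pullbackForm_zero {m n k : ℕ} (h : (Fin m → ℝ) → (Fin n → ℝ)) :
    pullbackForm h (0 : RawForm n k) = 0 := by
  funext x; exact ContinuousMultilinearMap.ext fun v => rfl

/-- `μ` is an `α`-horizontal form on `U` (for a parametrization `α = f` with domain `U`):
whenever `f ∘ h = f ∘ h'` on `V` for smooth `h h' : V → U`, the pullbacks `h*μ` and `h'*μ`
agree on `V`. -/
def IsHorizontal {n : ℕ} (U : Set (Fin n → ℝ)) (f : (Fin n → ℝ) → X) {k : ℕ}
    (μ : RawForm n k) : Prop :=
  ∀ ⦃m : ℕ⦄ (V : Set (Fin m → ℝ)) (h h' : (Fin m → ℝ) → (Fin n → ℝ)),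
    IsOpen V → ContDiffOn ℝ (⊤ : ℕ∞) h V → ContDiffOn ℝ (⊤ : ℕ∞) h' V →
    Set.MapsTo h V U → Set.MapsTo h' V U → Set.EqOn (f ∘ h) (f ∘ h') V →
    Set.EqOn (pullbackForm h μ) (pullbackForm h' μ) V

/-- The space `Ω^k(α)` of `α`-horizontal forms on the domain `U` of the plot `α = f`
(smooth alternating forms on `U`, normalized to vanish off `U`, that are `α`-horizontal). -/
def horizontalForms {n : ℕ} (U : Set (Fin n → ℝ)) (f : (Fin n → ℝ) → X) (k : ℕ) :
    Submodule ℝ (RawForm n k) where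
  carrier := {μ | ContDiffOn ℝ (⊤ : ℕ∞) μ U ∧ IsAlternating μ ∧ (∀ x ∉ U, μ x = 0) ∧
    IsHorizontal U f μ}
  add_mem' := by
    rintro a b ⟨ha1, ha2, ha3, ha4⟩ ⟨hb1, hb2, hb3, hb4⟩
    refine ⟨ha1.add hb1, ?_, ?_, ?_⟩
    · intro x v i j hv hij
      have h : (a + b) x v = a x v + b x v := rfl
      rw [h, ha2 x v i j hv hij, hb2 x v i j hv hij, add_zero]
    · intro x hx
      have h : (a + b) x = a x + b x := rfl
      rw [h, ha3 x hx, hb3 x hx, add_zero]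
    · intro m V h h' hV hh hh' hm hm' heq x hx
      have e1 := ha4 V h h' hV hh hh' hm hm' heq hx
      have e2 := hb4 V h h' hV hh hh' hm hm' heq hx
      rw [pullbackForm_add, pullbackForm_add]
      simp only [Pi.add_apply, e1, e2]
  zero_mem' := by
    refine ⟨contDiffOn_const, fun _ _ _ _ _ _ => rfl, fun _ _ => rfl, ?_⟩
    intro m V h h' hV hh hh' hm hm' heq x hx
    rw [pullbackForm_zero, pullbackForm_zero]
  smul_mem' := by
    rintro c a ⟨ha1, ha2, ha3, ha4⟩
    refine ⟨ha1.const_smul c, ?_, ?_, ?_⟩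
    · intro x v i j hv hij
      have h : (c • a) x v = c • (a x v) := rfl
      rw [h, ha2 x v i j hv hij, smul_zero]
    · intro x hx
      have h : (c • a) x = c • a x := rfl
      rw [h, ha3 x hx, smul_zero]
    · intro m V h h' hV hh hh' hm hm' heq x hx
      have e1 := ha4 V h h' hV hh hh' hm hm' heq hx
      rw [pullbackForm_smul, pullbackForm_smul]
      simp only [Pi.smul_apply, e1]

/-! ### Differential forms on diffeological spaces -/

/-- The plots of `D` with `n`-dimensional domain, bundled. -/
abbrev PlotsOn (D : Diffeology' X) (n : ℕ) :=
  {p : Set (Fin n → ℝ) × ((Fin n → ℝ) → X) // D.IsPlot p.1 p.2}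

/-- The data of a family of raw forms, one for each plot of `D`. -/
abbrev DiffFormData (D : Diffeology' X) (k : ℕ) :=
  ∀ (n : ℕ), PlotsOn D n → RawForm n k

/-- Such a family is a differential `k`-form on `(X, D)` when each member is a genuine
(smooth, alternating, normalized) form on the domain of its plot and the family is
compatible with smooth changes of coordinates: `ω_{f ∘ h} = h*(ω_f)`. -/
structure IsDiffForm {D : Diffeology' X} {k : ℕ} (ω : DiffFormData D k) : Prop where
  smooth : ∀ (n : ℕ) (U : Set (Fin n → ℝ)) (f : (Fin n → ℝ) → X) (hf : D.IsPlot U f),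
    ContDiffOn ℝ (⊤ : ℕ∞) (ω n ⟨(U, f), hf⟩) U
  alternating : ∀ (n : ℕ) (U : Set (Fin n → ℝ)) (f : (Fin n → ℝ) → X) (hf : D.IsPlot U f),
    IsAlternating (ω n ⟨(U, f), hf⟩)
  vanish : ∀ (n : ℕ) (U : Set (Fin n → ℝ)) (f : (Fin n → ℝ) → X) (hf : D.IsPlot U f),
    ∀ x ∉ U, ω n ⟨(U, f), hf⟩ x = 0
  compat : ∀ {m n : ℕ} {U : Set (Fin n → ℝ)} {f : (Fin n → ℝ) → X} (hf : D.IsPlot U f)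
      {V : Set (Fin m → ℝ)} {h : (Fin m → ℝ) → (Fin n → ℝ)} (hV : IsOpen V)
      (hh : ContDiffOn ℝ (⊤ : ℕ∞) h V) (hmap : Set.MapsTo h V U),
      Set.EqOn (ω m ⟨(V, f ∘ h), D.precomp hf hV hh hmap⟩)
        (pullbackForm h (ω n ⟨(U, f), hf⟩)) V

/-- The space `Ω^k(X, D)` of differential `k`-forms on a diffeological space. -/
def Omega (D : Diffeology' X) (k : ℕ) : Submodule ℝ (DiffFormData D k) where
  carrier := {ω | IsDiffForm ω}
  add_mem' := by
    rintro a b ha hb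
    refine ⟨fun n U f hf => (ha.smooth n U f hf).add (hb.smooth n U f hf), ?_, ?_, ?_⟩
    · intro n U f hf x v i j hv hij
      have h : (a + b) n ⟨(U, f), hf⟩ x v = a n ⟨(U, f), hf⟩ x v + b n ⟨(U, f), hf⟩ x v := rfl
      rw [h, ha.alternating n U f hf x v i j hv hij, hb.alternating n U f hf x v i j hv hij,
        add_zero]
    · intro n U f hf x hx
      have h : (a + b) n ⟨(U, f), hf⟩ x = a n ⟨(U, f), hf⟩ x + b n ⟨(U, f), hf⟩ x := rfl
      rw [h, ha.vanish n U f hf x hx, hb.vanish n U f hf x hx, add_zero]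
    · intro m n U f hf V h hV hh hmap x hx
      have e1 := ha.compat hf hV hh hmap hx
      have e2 := hb.compat hf hV hh hmap hx
      have h3 : (a + b) m ⟨(V, f ∘ h), D.precomp hf hV hh hmap⟩ x
          = a m ⟨(V, f ∘ h), D.precomp hf hV hh hmap⟩ x
            + b m ⟨(V, f ∘ h), D.precomp hf hV hh hmap⟩ x := rfl
      have h4 : (a + b) n ⟨(U, f), hf⟩ = a n ⟨(U, f), hf⟩ + b n ⟨(U, f), hf⟩ := rfl
      rw [h3, h4, pullbackForm_add, e1, e2]; rfl
  zero_mem' := by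
    refine ⟨fun _ _ _ _ => contDiffOn_const, fun _ _ _ _ _ _ _ _ _ _ => rfl,
      fun _ _ _ _ _ _ => rfl, ?_⟩
    intro m n U f hf V h hV hh hmap x hx
    have h4 : (0 : DiffFormData D k) n ⟨(U, f), hf⟩ = 0 := rfl
    show (0 : DiffFormData D k) m ⟨(V, f ∘ h), D.precomp hf hV hh hmap⟩ x
      = pullbackForm h ((0 : DiffFormData D k) n ⟨(U, f), hf⟩) x
    rw [h4, pullbackForm_zero]; rfl
  smul_mem' := by
    rintro c a ha
    refine ⟨fun n U f hf => (ha.smooth n U f hf).const_smul c, ?_, ?_, ?_⟩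
    · intro n U f hf x v i j hv hij
      have h : (c • a) n ⟨(U, f), hf⟩ x v = c • (a n ⟨(U, f), hf⟩ x v) := rfl
      rw [h, ha.alternating n U f hf x v i j hv hij, smul_zero]
    · intro n U f hf x hx
      have h : (c • a) n ⟨(U, f), hf⟩ x = c • (a n ⟨(U, f), hf⟩ x) := rfl
      rw [h, ha.vanish n U f hf x hx, smul_zero]
    · intro m n U f hf V h hV hh hmap x hx
      have e1 := ha.compat hf hV hh hmap hx
      have h3 : (c • a) m ⟨(V, f ∘ h), D.precomp hf hV hh hmap⟩ x
          = c • (a m ⟨(V, f ∘ h), D.precomp hf hV hh hmap⟩ x) := rfl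
      have h4 : (c • a) n ⟨(U, f), hf⟩ = c • (a n ⟨(U, f), hf⟩) := rfl
      rw [h3, h4, pullbackForm_smul, e1]; rfl

/-- The exterior derivative on families of forms, defined plotwise. -/
def dData (D : Diffeology' X) {k : ℕ} (ω : DiffFormData D k) : DiffFormData D (k + 1) :=
  fun n p => killOn p.1.1 (rawExtDeriv (ω n p))

/-- The pullback of a family of forms along a differentiable map, defined plotwise:
`(F*ω)_f = ω_{F ∘ f}`. -/
def pullData {DX : Diffeology' X} {DY : Diffeology' Y} {F : X → Y} (hF : DX.Smooth DY F)
    {k : ℕ} (ω : DiffFormData DY k) : DiffFormData DX k :=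
  fun n p => ω n ⟨(p.1.1, F ∘ p.1.2), hF p.1.1 p.1.2 p.2⟩

/-- The diffeological pullback of an ordinary form `μ` on a Euclidean domain along a map
`q : Z → ℝ^m` (differentiable into the domain of `μ`): the component at a plot `g` is
`(q ∘ g)*μ` (normalized on the domain of `g`). -/
def ordPull (DZ : Diffeology' Z) {m k : ℕ} (q : Z → (Fin m → ℝ)) (μ : RawForm m k) :
    DiffFormData DZ k :=
  fun _ p => killOn p.1.1 (pullbackForm (fun y => q (p.1.2 y)) μ)

/-- The "cross": the union of the two coordinate axes in `ℝ²`. -/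
def Cross : Set (ℝ × ℝ) := {p | p.1 * p.2 = 0}

/-- The first axis inclusion `α(s) = (s, 0)`. -/
def crossAlpha : (Fin 1 → ℝ) → Cross := fun s => ⟨(s 0, 0), by simp [Cross]⟩

/-- The second axis inclusion `β(t) = (0, t)`. -/
def crossBeta : (Fin 1 → ℝ) → Cross := fun t => ⟨(0, t 0), by simp [Cross]⟩

/-- Pairs of smooth functions `F, G : ℝ → ℝ` with `F(0) = G(0)`. -/
def crossPairs : Submodule ℝ ((ℝ → ℝ) × (ℝ → ℝ)) where
  carrier := {p | ContDiff ℝ (⊤ : ℕ∞) p.1 ∧ ContDiff ℝ (⊤ : ℕ∞) p.2 ∧ p.1 0 = p.2 0}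
  add_mem' := by
    rintro a b ⟨ha1, ha2, ha3⟩ ⟨hb1, hb2, hb3⟩
    refine ⟨ha1.add hb1, ha2.add hb2, ?_⟩
    show a.1 0 + b.1 0 = a.2 0 + b.2 0
    rw [ha3, hb3]
  zero_mem' := ⟨contDiff_const, contDiff_const, rfl⟩
  smul_mem' := by
    rintro c a ⟨ha1, ha2, ha3⟩
    refine ⟨ha1.const_smul c, ha2.const_smul c, ?_⟩
    show c • a.1 0 = c • a.2 0
    rw [ha3]

section CrossProofAux

open ContinuousMultilinearMap

abbrev Ev (n : ℕ) := Fin n → ℝ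

lemma fin0_fun_eq {X : Type*} (a b : Fin 0 → X) : a = b := funext fun i => i.elim0

/-! ### Local factorization diffeology and Lemma A -/

def locallyFactors {n : ℕ} (U : Set (Ev n)) (f : Ev n → Cross) : Prop :=
  ∀ x ∈ U, ∃ V : Set (Ev n), IsOpen V ∧ x ∈ V ∧ V ⊆ U ∧
    ∃ h : Ev n → Ev 1, ContDiffOn ℝ (⊤ : ℕ∞) h V ∧
      (Set.EqOn f (crossAlpha ∘ h) V ∨ Set.EqOn f (crossBeta ∘ h) V)

def crossD0 : Diffeology' Cross where
  IsPlot _ U f := IsOpen U ∧ locallyFactors U f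
  isOpen_dom h := h.1
  const_plot {n U} hU x := by
    refine ⟨hU, fun y hy => ⟨U, hU, hy, subset_rfl, ?_⟩⟩
    rcases mul_eq_zero.mp x.2 with h1 | h2
    · refine ⟨fun _ _ => x.1.2, contDiffOn_const, Or.inr fun z _ => ?_⟩
      exact Subtype.ext (Prod.ext h1 rfl)
    · refine ⟨fun _ _ => x.1.1, contDiffOn_const, Or.inl fun z _ => ?_⟩
      exact Subtype.ext (Prod.ext rfl h2)
  congr_plot {n U f g} hf hfg := by
    refine ⟨hf.1, fun x hx => ?_⟩
    obtain ⟨V, hVo, hxV, hVU, h, hh, hc⟩ := hf.2 x hx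
    exact ⟨V, hVo, hxV, hVU, h, hh, hc.imp (fun he z hz => (hfg (hVU hz)).symm.trans (he hz))
      (fun he z hz => (hfg (hVU hz)).symm.trans (he hz))⟩
  locality {n U f} hU hloc := by
    refine ⟨hU, fun x hx => ?_⟩
    obtain ⟨V, hVU, hVo, hxV, hplot⟩ := hloc x hx
    obtain ⟨V', hV'o, hxV', hV'V, h, hh, hc⟩ := hplot.2 x hxV
    exact ⟨V', hV'o, hxV', hV'V.trans hVU, h, hh, hc⟩
  precomp {m n U f} hf {V h} hV hh hmap := by
    refine ⟨hV, fun x hx => ?_⟩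
    obtain ⟨V₁, hV₁o, hxV₁, hV₁U, h₁, hh₁, hc⟩ := hf.2 (h x) (hmap hx)
    refine ⟨V ∩ h ⁻¹' V₁, (hh.continuousOn).isOpen_inter_preimage hV hV₁o,
      ⟨hx, hxV₁⟩, inter_subset_left, h₁ ∘ h,
      hh₁.comp (hh.mono inter_subset_left) (fun z hz => hz.2), ?_⟩
    refine hc.imp (fun he z hz => he hz.2) (fun he z hz => he hz.2)

lemma crossD0_alpha : crossD0.IsPlot Set.univ crossAlpha :=
  ⟨isOpen_univ, fun x _ => ⟨Set.univ, isOpen_univ, trivial, subset_rfl, id, contDiffOn_id,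
    Or.inl fun _ _ => rfl⟩⟩

lemma crossD0_beta : crossD0.IsPlot Set.univ crossBeta :=
  ⟨isOpen_univ, fun x _ => ⟨Set.univ, isOpen_univ, trivial, subset_rfl, id, contDiffOn_id,
    Or.inr fun _ _ => rfl⟩⟩

lemma plot_locallyFactors {D : Diffeology' Cross}
    (hgen : D.IsGeneratedBy₂ Set.univ crossAlpha Set.univ crossBeta)
    {n : ℕ} {W : Set (Ev n)} {g : Ev n → Cross} (hg : D.IsPlot W g) :
    locallyFactors W g :=
  (hgen.2.2 crossD0 crossD0_alpha crossD0_beta W g hg).2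

/-! ### The analytic squashing map ψ -/

def qsum {n : ℕ} (z : Ev n) : ℝ := ∑ i, z i ^ 2

lemma qsum_nonneg {n : ℕ} (z : Ev n) : 0 ≤ qsum z :=
  Finset.sum_nonneg fun i _ => sq_nonneg _

lemma one_add_qsum_pos {n : ℕ} (z : Ev n) : 0 < 1 + qsum z := by
  have := qsum_nonneg z; linarith

lemma contDiff_qsum {n : ℕ} : ContDiff ℝ (⊤ : ℕ∞) (qsum (n := n)) := by
  unfold qsum
  exact ContDiff.sum fun i _ => ((ContinuousLinearMap.proj i :
    Ev n →L[ℝ] ℝ).contDiff).pow 2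

def sfun {n : ℕ} (z : Ev n) : ℝ := (Real.sqrt (1 + qsum z))⁻¹

lemma sqrt_one_add_qsum_pos {n : ℕ} (z : Ev n) : 0 < Real.sqrt (1 + qsum z) :=
  Real.sqrt_pos.mpr (one_add_qsum_pos z)

lemma contDiff_sfun {n : ℕ} : ContDiff ℝ (⊤ : ℕ∞) (sfun (n := n)) := by
  rw [contDiff_iff_contDiffAt]
  intro z
  exact (((Real.contDiffAt_sqrt (one_add_qsum_pos z).ne').comp z
    ((contDiff_const.add contDiff_qsum).contDiffAt)).inv (sqrt_one_add_qsum_pos z).ne')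

lemma sfun_pos {n : ℕ} (z : Ev n) : 0 < sfun z := inv_pos.mpr (sqrt_one_add_qsum_pos z)

lemma sfun_zero {n : ℕ} : sfun (0 : Ev n) = 1 := by
  have : qsum (0 : Ev n) = 0 := by simp [qsum]
  simp [sfun, this]

def rmap {n : ℕ} (z : Ev n) : Ev n := sfun z • z

lemma contDiff_rmap {n : ℕ} : ContDiff ℝ (⊤ : ℕ∞) (rmap (n := n)) :=
  contDiff_sfun.smul contDiff_id

lemma rmap_zero {n : ℕ} : rmap (0 : Ev n) = 0 := by simp [rmap]

lemma norm_rmap_lt {n : ℕ} (z : Ev n) : ‖rmap z‖ < 1 := by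
  have h1 : ‖z‖ ≤ Real.sqrt (qsum z) := by
    refine (pi_norm_le_iff_of_nonneg (Real.sqrt_nonneg _)).mpr fun i => ?_
    rw [Real.norm_eq_abs, ← Real.sqrt_sq_eq_abs]
    exact Real.sqrt_le_sqrt (Finset.single_le_sum (fun j _ => sq_nonneg (z j))
      (Finset.mem_univ i))
  have h2 : ‖z‖ < Real.sqrt (1 + qsum z) := by
    refine h1.trans_lt (Real.sqrt_lt_sqrt (qsum_nonneg z) ?_)
    linarith
  have h3 : 0 < sfun z := sfun_pos z
  calc ‖rmap z‖ = sfun z * ‖z‖ := by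
        rw [rmap, norm_smul, Real.norm_eq_abs, abs_of_pos h3]
    _ < sfun z * Real.sqrt (1 + qsum z) := mul_lt_mul_of_pos_left h2 h3
    _ = 1 := inv_mul_cancel₀ (sqrt_one_add_qsum_pos z).ne'

lemma hasFDerivAt_rmap_zero {n : ℕ} :
    HasFDerivAt (rmap (n := n)) (ContinuousLinearMap.id ℝ (Ev n)) 0 := by
  have hs : HasFDerivAt (sfun (n := n)) (fderiv ℝ sfun 0) 0 :=
    ((contDiff_sfun.differentiable (by simp)) 0).hasFDerivAt
  have := hs.smul (hasFDerivAt_id (0 : Ev n))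
  have heq : sfun (0 : Ev n) • ContinuousLinearMap.id ℝ (Ev n) +
      (fderiv ℝ sfun 0).smulRight (id (0 : Ev n)) = ContinuousLinearMap.id ℝ (Ev n) := by
    rw [sfun_zero, one_smul]
    ext y
    simp
  rw [heq] at this
  exact this

def psiMap {n : ℕ} (x : Ev n) (ε : ℝ) : Ev n → Ev n := fun y => x + ε • rmap (y - x)

lemma contDiff_psiMap {n : ℕ} (x : Ev n) (ε : ℝ) : ContDiff ℝ (⊤ : ℕ∞) (psiMap x ε) :=
  contDiff_const.add ((contDiff_rmap.comp (contDiff_id.sub contDiff_const)).const_smul ε)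

lemma psiMap_self {n : ℕ} (x : Ev n) (ε : ℝ) : psiMap x ε x = x := by
  simp [psiMap, rmap_zero]

lemma psiMap_mem_ball {n : ℕ} (x : Ev n) {ε : ℝ} (hε : 0 < ε) (y : Ev n) :
    psiMap x ε y ∈ Metric.ball x ε := by
  rw [Metric.mem_ball, dist_eq_norm]
  have : psiMap x ε y - x = ε • rmap (y - x) := by simp [psiMap]
  rw [this, norm_smul, Real.norm_eq_abs, abs_of_pos hε]
  calc ε * ‖rmap (y - x)‖ < ε * 1 := mul_lt_mul_of_pos_left (norm_rmap_lt _) hε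
    _ = ε := mul_one ε

lemma hasFDerivAt_psiMap {n : ℕ} (x : Ev n) (ε : ℝ) :
    HasFDerivAt (psiMap x ε) (ε • ContinuousLinearMap.id ℝ (Ev n)) x := by
  have h1 : HasFDerivAt (fun y : Ev n => rmap (y - x))
      (ContinuousLinearMap.id ℝ (Ev n)) x := by
    have h0 : HasFDerivAt (fun y : Ev n => y - x) (ContinuousLinearMap.id ℝ (Ev n)) x :=
      (hasFDerivAt_id x).sub_const x
    have h2 : HasFDerivAt rmap (ContinuousLinearMap.id ℝ (Ev n)) ((fun y : Ev n => y - x) x) := by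
      rw [show (fun y : Ev n => y - x) x = 0 by simp]
      exact hasFDerivAt_rmap_zero
    have := HasFDerivAt.comp (f := fun y : Ev n => y - x) x h2 h0
    simpa using this
  exact (h1.const_smul ε).const_add x

end CrossProofAux
section LemmaB

/-- The key determination lemma: the value of a diffeological form on any plot is
determined, at a point where the plot factors through a 1-dimensional plot `c`,
by the component of the form at `c`. -/
lemma lemmaB {D : Diffeology' Cross} {k : ℕ} {ω : DiffFormData D k} (hω : IsDiffForm ω)
    {c : Ev 1 → Cross} (hc : D.IsPlot Set.univ c)
    {n : ℕ} {W : Set (Ev n)} {g : Ev n → Cross} (hg : D.IsPlot W g)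
    {x : Ev n} {V : Set (Ev n)} (hV : IsOpen V) (hxV : x ∈ V) (hVW : V ⊆ W)
    {h : Ev n → Ev 1} (hh : ContDiffOn ℝ (⊤ : ℕ∞) h V) (heq : Set.EqOn g (c ∘ h) V) :
    ω n ⟨(W, g), hg⟩ x = pullbackForm h (ω 1 ⟨(Set.univ, c), hc⟩) x := by
  obtain ⟨ε, hε, hball⟩ := Metric.isOpen_iff.mp hV x hxV
  set ψ := psiMap x ε with hψdef
  have hψx : ψ x = x := psiMap_self x ε
  have hψV : Set.MapsTo ψ Set.univ V := fun y _ => hball (psiMap_mem_ball x hε y)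
  have hψW : Set.MapsTo ψ Set.univ W := fun y hy => hVW (hψV hy)
  have hψc : ContDiffOn ℝ (⊤ : ℕ∞) ψ Set.univ := (contDiff_psiMap x ε).contDiffOn
  have hhψ : ContDiffOn ℝ (⊤ : ℕ∞) (h ∘ ψ) Set.univ := hh.comp hψc hψV
  have hmapu : Set.MapsTo (h ∘ ψ) Set.univ Set.univ := Set.mapsTo_univ _ _
  have e1 := hω.compat hg isOpen_univ hψc hψW (Set.mem_univ x)
  have e2 := hω.compat hc isOpen_univ hhψ hmapu (Set.mem_univ x)
  have hfe : g ∘ ψ = c ∘ (h ∘ ψ) := funext fun y => heq (hψV (Set.mem_univ y))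
  have hpe : (⟨(Set.univ, g ∘ ψ), D.precomp hg isOpen_univ hψc hψW⟩ : PlotsOn D n) =
      ⟨(Set.univ, c ∘ (h ∘ ψ)), D.precomp hc isOpen_univ hhψ hmapu⟩ :=
    Subtype.ext (by
      show ((Set.univ : Set (Ev n)), g ∘ ψ) = ((Set.univ : Set (Ev n)), c ∘ (h ∘ ψ))
      rw [hfe])
  rw [hpe] at e1
  have key : pullbackForm ψ (ω n ⟨(W, g), hg⟩) x =
      pullbackForm (h ∘ ψ) (ω 1 ⟨(Set.univ, c), hc⟩) x := by rw [← e1, e2]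
  -- derivative computations
  have hψd : HasFDerivAt ψ (ε • ContinuousLinearMap.id ℝ (Ev n)) x := hasFDerivAt_psiMap x ε
  have hfψ : fderiv ℝ ψ x = ε • ContinuousLinearMap.id ℝ (Ev n) := hψd.fderiv
  have hhd : DifferentiableAt ℝ h x :=
    ((hh.contDiffAt (hV.mem_nhds hxV)).differentiableAt (by simp))
  have hfhψ : fderiv ℝ (h ∘ ψ) x =
      (fderiv ℝ h x).comp (ε • ContinuousLinearMap.id ℝ (Ev n)) := by
    rw [fderiv_comp x (by rwa [hψx]) hψd.differentiableAt, hψx, hfψ]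
  set μ := ω n ⟨(W, g), hg⟩ with hμdef
  set ν := ω 1 ⟨(Set.univ, c), hc⟩ with hνdef
  refine ContinuousMultilinearMap.ext fun v => ?_
  have hL : pullbackForm ψ μ x v = (ε ^ k) • μ x v := by
    rw [pullbackForm]
    rw [ContinuousMultilinearMap.compContinuousLinearMap_apply]
    rw [hψx]
    have : (fun i => (fderiv ℝ ψ x) (v i)) = fun i => ε • v i := by
      funext i; rw [hfψ]; rfl
    rw [this]
    have := (μ x).map_smul_univ (fun _ : Fin k => ε) v
    simpa [Finset.prod_const] using this
  have hR : pullbackForm (h ∘ ψ) ν x v = (ε ^ k) • pullbackForm h ν x v := by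
    rw [pullbackForm, pullbackForm]
    rw [ContinuousMultilinearMap.compContinuousLinearMap_apply,
      ContinuousMultilinearMap.compContinuousLinearMap_apply]
    have hpt : (h ∘ ψ) x = h x := by rw [Function.comp_apply, hψx]
    rw [hpt]
    have harg : (fun i => (fderiv ℝ (h ∘ ψ) x) (v i)) =
        fun i => ε • (fderiv ℝ h x) (v i) := by
      funext i
      rw [hfhψ]
      simp
    rw [harg]
    have := (ν (h x)).map_smul_univ (fun _ : Fin k => ε) (fun i => (fderiv ℝ h x) (v i))
    simpa [Finset.prod_const] using this
  have h2 : (ε ^ k) • μ x v = (ε ^ k) • pullbackForm h ν x v := by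
    rw [← hL, ← hR, key]
  exact smul_right_injective ℝ (pow_ne_zero k hε.ne') h2

end LemmaB
section HighDegree

lemma mem_Omega_iff {D : Diffeology' Cross} {k : ℕ} {ω : DiffFormData D k} :
    ω ∈ Omega D k ↔ IsDiffForm ω := Iff.rfl

lemma oneDim_form_zero {k : ℕ} (hk : 2 ≤ k) {μ : RawForm 1 k} (halt : IsAlternating μ)
    (x : Ev 1) : μ x = 0 := by
  refine ContinuousMultilinearMap.ext fun v => ?_
  have hv : v = fun i => (v i 0) • (fun _ : Fin 1 => (1 : ℝ)) := by
    funext i j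
    rw [Subsingleton.elim j 0]
    simp
  rw [hv]
  rw [(μ x).map_smul_univ (fun i => v i 0) (fun _ : Fin k => fun _ : Fin 1 => (1 : ℝ))]
  have h0 : μ x (fun _ : Fin k => fun _ : Fin 1 => (1 : ℝ)) = 0 := by
    refine halt x _ ⟨0, by omega⟩ ⟨1, by omega⟩ rfl ?_
    simp [Fin.ext_iff]
  rw [h0, smul_zero]
  simp

lemma omega_high_eq_zero {D : Diffeology' Cross}
    (hgen : D.IsGeneratedBy₂ Set.univ crossAlpha Set.univ crossBeta)
    {k : ℕ} (hk : 2 ≤ k) (ω : DiffFormData D k) (hω : ω ∈ Omega D k) : ω = 0 := by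
  have hω' : IsDiffForm ω := hω
  funext n p
  obtain ⟨⟨W, g⟩, hg⟩ := p
  funext x
  show ω n ⟨(W, g), hg⟩ x = 0
  by_cases hx : x ∈ W
  · obtain ⟨V, hVo, hxV, hVW, h, hh, hcase⟩ := plot_locallyFactors hgen hg x hx
    have main : ∀ (c : Ev 1 → Cross) (hc : D.IsPlot Set.univ c),
        Set.EqOn g (c ∘ h) V → ω n ⟨(W, g), hg⟩ x = 0 := by
      intro c hc heq
      rw [lemmaB hω' hc hg hVo hxV hVW hh heq]
      have hz : ω 1 ⟨(Set.univ, c), hc⟩ (h x) = 0 :=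
        oneDim_form_zero hk (hω'.alternating 1 Set.univ c hc) (h x)
      refine ContinuousMultilinearMap.ext fun v => ?_
      rw [pullbackForm, ContinuousMultilinearMap.compContinuousLinearMap_apply, hz]
      rfl
    rcases hcase with hca | hcb
    · exact main crossAlpha hgen.1 hca
    · exact main crossBeta hgen.2.1 hcb
  · exact hω'.vanish n W g hg x hx

end HighDegree
section ZeroForms

/-! ### Degree 0 -/

def v0 {n : ℕ} : Fin 0 → Ev n := fun i => i.elim0

def k0L (n : ℕ) : ℝ →L[ℝ] ContinuousMultilinearMap ℝ (fun _ : Fin 0 => Ev n) ℝ :=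
  (ContinuousLinearMap.id ℝ ℝ).smulRight (ContinuousMultilinearMap.constOfIsEmpty ℝ _ 1)

def form0 {n : ℕ} (t : ℝ) : ContinuousMultilinearMap ℝ (fun _ : Fin 0 => Ev n) ℝ := k0L n t

lemma form0_apply {n : ℕ} (t : ℝ) (v : Fin 0 → Ev n) : form0 t v = t := by
  simp [form0, k0L]

lemma form0_arg {n : ℕ} (μ : ContinuousMultilinearMap ℝ (fun _ : Fin 0 => Ev n) ℝ)
    (v w : Fin 0 → Ev n) : μ v = μ w := by rw [fin0_fun_eq v w]

def evalF {D : Diffeology' Cross} (hα : D.IsPlot Set.univ crossAlpha)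
    (ω : DiffFormData D 0) : ℝ → ℝ :=
  fun a => ω 1 ⟨(Set.univ, crossAlpha), hα⟩ (fun _ => a) v0

def evalG {D : Diffeology' Cross} (hβ : D.IsPlot Set.univ crossBeta)
    (ω : DiffFormData D 0) : ℝ → ℝ :=
  fun a => ω 1 ⟨(Set.univ, crossBeta), hβ⟩ (fun _ => a) v0

lemma eval_contDiff {D : Diffeology' Cross} {c : Ev 1 → Cross} (hc : D.IsPlot Set.univ c)
    {ω : DiffFormData D 0} (hω : IsDiffForm ω) :
    ContDiff ℝ (⊤ : ℕ∞) (fun a : ℝ => ω 1 ⟨(Set.univ, c), hc⟩ (fun _ => a) v0) := by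
  have hμ : ContDiff ℝ (⊤ : ℕ∞) (ω 1 ⟨(Set.univ, c), hc⟩) := by
    rw [← contDiffOn_univ]
    exact hω.smooth 1 Set.univ c hc
  have hlin : ContDiff ℝ (⊤ : ℕ∞) (fun a : ℝ => (fun _ : Fin 1 => a)) :=
    (ContinuousLinearMap.pi fun _ : Fin 1 => ContinuousLinearMap.id ℝ ℝ).contDiff
  exact (ContinuousMultilinearMap.apply ℝ (fun _ : Fin 0 => Ev 1) ℝ v0).contDiff.comp
    (hμ.comp hlin)

/-- The compatibility of 0-forms with constant reparametrizations forces the two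
axis values to agree at the origin. -/
lemma evalF_zero_eq_evalG_zero {D : Diffeology' Cross} (hα : D.IsPlot Set.univ crossAlpha)
    (hβ : D.IsPlot Set.univ crossBeta) {ω : DiffFormData D 0} (hω : IsDiffForm ω) :
    evalF hα ω 0 = evalG hβ ω 0 := by
  set x₀ : Ev 1 := fun _ => 0 with hx₀
  set c0 : Ev 1 → Ev 1 := fun _ => x₀ with hc0
  have hc0c : ContDiffOn ℝ (⊤ : ℕ∞) c0 Set.univ := contDiffOn_const
  have e1 := hω.compat hα isOpen_univ hc0c (Set.mapsTo_univ _ _) (Set.mem_univ x₀)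
  have e2 := hω.compat hβ isOpen_univ hc0c (Set.mapsTo_univ _ _) (Set.mem_univ x₀)
  have hpe : (⟨(Set.univ, crossAlpha ∘ c0), D.precomp hα isOpen_univ hc0c
      (Set.mapsTo_univ _ _)⟩ : PlotsOn D 1) =
      ⟨(Set.univ, crossBeta ∘ c0), D.precomp hβ isOpen_univ hc0c (Set.mapsTo_univ _ _)⟩ := by
    apply Subtype.ext
    show ((Set.univ : Set (Ev 1)), crossAlpha ∘ c0) = ((Set.univ : Set (Ev 1)), crossBeta ∘ c0)
    have : crossAlpha ∘ c0 = crossBeta ∘ c0 := funext fun y => Subtype.ext rfl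
    rw [this]
  rw [hpe] at e1
  have key : pullbackForm c0 (ω 1 ⟨(Set.univ, crossAlpha), hα⟩) x₀ =
      pullbackForm c0 (ω 1 ⟨(Set.univ, crossBeta), hβ⟩) x₀ := by rw [← e1, e2]
  have lhs : pullbackForm c0 (ω 1 ⟨(Set.univ, crossAlpha), hα⟩) x₀ v0 = evalF hα ω 0 := by
    rw [pullbackForm, ContinuousMultilinearMap.compContinuousLinearMap_apply]
    exact form0_arg _ _ _
  have rhs : pullbackForm c0 (ω 1 ⟨(Set.univ, crossBeta), hβ⟩) x₀ v0 = evalG hβ ω 0 := by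
    rw [pullbackForm, ContinuousMultilinearMap.compContinuousLinearMap_apply]
    exact form0_arg _ _ _
  rw [← lhs, ← rhs, key]

def phiC (F G : ℝ → ℝ) : Cross → ℝ := fun p => F p.1.1 + G p.1.2 - F 0

def S0form (D : Diffeology' Cross) (F G : ℝ → ℝ) : DiffFormData D 0 :=
  fun n p => killOn p.1.1 (fun x => form0 (phiC F G (p.1.2 x)))

lemma S0form_isDiffForm {D : Diffeology' Cross}
    (hgen : D.IsGeneratedBy₂ Set.univ crossAlpha Set.univ crossBeta)
    {F G : ℝ → ℝ} (hF : ContDiff ℝ (⊤ : ℕ∞) F) (hG : ContDiff ℝ (⊤ : ℕ∞) G) (hFG : F 0 = G 0) :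
    IsDiffForm (S0form D F G) := by
  constructor
  · -- smoothness
    intro n U f hf
    have hUo : IsOpen U := D.isOpen_dom hf
    have hsm : ContDiffOn ℝ (⊤ : ℕ∞) (fun x => form0 (phiC F G (f x)) :
        Ev n → ContinuousMultilinearMap ℝ (fun _ : Fin 0 => Ev n) ℝ) U := by
      intro x hx
      obtain ⟨V, hVo, hxV, hVU, h, hh, hcase⟩ := plot_locallyFactors hgen hf x hx
      have hhx : ContDiffAt ℝ (⊤ : ℕ∞) h x := hh.contDiffAt (hVo.mem_nhds hxV)
      have hproj : ContDiffAt ℝ (⊤ : ℕ∞) (fun y : Ev n => h y 0) x :=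
        ((ContinuousLinearMap.proj (0 : Fin 1) : Ev 1 →L[ℝ] ℝ).contDiff.contDiffAt).comp x hhx
      have key : ContDiffAt ℝ (⊤ : ℕ∞) (fun x => form0 (phiC F G (f x)) :
          Ev n → ContinuousMultilinearMap ℝ (fun _ : Fin 0 => Ev n) ℝ) x := by
        rcases hcase with hca | hcb
        · have hev : Set.EqOn (fun y => form0 (phiC F G (f y)) :
              Ev n → ContinuousMultilinearMap ℝ (fun _ : Fin 0 => Ev n) ℝ)
              (fun y => form0 (F (h y 0))) V := by
            intro y hy
            have : f y = crossAlpha (h y) := hca hy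
            simp only [this, phiC, crossAlpha]
            rw [hFG]
            ring_nf
          have hcd : ContDiffAt ℝ (⊤ : ℕ∞) (fun y : Ev n => form0 (F (h y 0)) :
              Ev n → ContinuousMultilinearMap ℝ (fun _ : Fin 0 => Ev n) ℝ) x :=
            ((k0L n).contDiff.contDiffAt).comp x ((hF.contDiffAt).comp x hproj)
          exact hcd.congr_of_eventuallyEq
            (Filter.eventuallyEq_of_mem (hVo.mem_nhds hxV) hev)
        · have hev : Set.EqOn (fun y => form0 (phiC F G (f y)) :
              Ev n → ContinuousMultilinearMap ℝ (fun _ : Fin 0 => Ev n) ℝ)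
              (fun y => form0 (G (h y 0))) V := by
            intro y hy
            have : f y = crossBeta (h y) := hcb hy
            simp only [this, phiC, crossBeta]
            ring_nf
          have hcd : ContDiffAt ℝ (⊤ : ℕ∞) (fun y : Ev n => form0 (G (h y 0)) :
              Ev n → ContinuousMultilinearMap ℝ (fun _ : Fin 0 => Ev n) ℝ) x :=
            ((k0L n).contDiff.contDiffAt).comp x ((hG.contDiffAt).comp x hproj)
          exact hcd.congr_of_eventuallyEq
            (Filter.eventuallyEq_of_mem (hVo.mem_nhds hxV) hev)
      exact key.contDiffWithinAt
    refine hsm.congr fun y hy => ?_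
    show (Set.indicator U (fun x => form0 (phiC F G (f x)))) y = form0 (phiC F G (f y))
    exact Set.indicator_of_mem hy _
  · intro n U f hf x v i j hv hij
    exact i.elim0
  · intro n U f hf x hx
    show (Set.indicator U (fun x => form0 (phiC F G (f x)))) x = 0
    exact Set.indicator_of_notMem hx _
  · intro m n U f hf V h hV hh hmap x hx
    refine ContinuousMultilinearMap.ext fun v => ?_
    show (Set.indicator V (fun y => form0 (phiC F G ((f ∘ h) y)))) x v =
      (pullbackForm h (killOn U (fun y => form0 (phiC F G (f y)))) x) v
    rw [Set.indicator_of_mem hx, pullbackForm,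
      ContinuousMultilinearMap.compContinuousLinearMap_apply,
      killOn, Set.indicator_of_mem (hmap hx), form0_apply, form0_apply]
    rfl

end ZeroForms
section ZeroEquiv

lemma S0_roundF {D : Diffeology' Cross}
    (hgen : D.IsGeneratedBy₂ Set.univ crossAlpha Set.univ crossBeta)
    {F G : ℝ → ℝ} (hFG : F 0 = G 0) : evalF hgen.1 (S0form D F G) = F := by
  funext a
  show (Set.indicator Set.univ (fun x : Ev 1 => form0 (phiC F G (crossAlpha x))))
    (fun _ => a) v0 = F a
  rw [Set.indicator_of_mem (Set.mem_univ _), form0_apply]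
  show F a + G 0 - F 0 = F a
  rw [← hFG]; ring

lemma S0_roundG {D : Diffeology' Cross}
    (hgen : D.IsGeneratedBy₂ Set.univ crossAlpha Set.univ crossBeta)
    {F G : ℝ → ℝ} (hFG : F 0 = G 0) : evalG hgen.2.1 (S0form D F G) = G := by
  funext a
  show (Set.indicator Set.univ (fun x : Ev 1 => form0 (phiC F G (crossBeta x))))
    (fun _ => a) v0 = G a
  rw [Set.indicator_of_mem (Set.mem_univ _), form0_apply]
  show F 0 + G a - F 0 = G a
  ring

lemma S0_round2 {D : Diffeology' Cross}
    (hgen : D.IsGeneratedBy₂ Set.univ crossAlpha Set.univ crossBeta)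
    {ω : DiffFormData D 0} (hω : IsDiffForm ω) :
    S0form D (evalF hgen.1 ω) (evalG hgen.2.1 ω) = ω := by
  set F := evalF hgen.1 ω with hF
  set G := evalG hgen.2.1 ω with hG
  have hFG : F 0 = G 0 := evalF_zero_eq_evalG_zero hgen.1 hgen.2.1 hω
  funext n p
  obtain ⟨⟨W, g⟩, hg⟩ := p
  funext x
  show killOn W (fun y => form0 (phiC F G (g y))) x = ω n ⟨(W, g), hg⟩ x
  by_cases hx : x ∈ W
  · rw [killOn, Set.indicator_of_mem hx]
    obtain ⟨V, hVo, hxV, hVW, h, hh, hcase⟩ := plot_locallyFactors hgen hg x hx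
    have hxeq : (fun _ : Fin 1 => h x 0) = h x := funext fun j => by
      rw [Subsingleton.elim j 0]
    rcases hcase with hca | hcb
    · rw [lemmaB hω hgen.1 hg hVo hxV hVW hh hca]
      refine ContinuousMultilinearMap.ext fun v => ?_
      rw [form0_apply, pullbackForm, ContinuousMultilinearMap.compContinuousLinearMap_apply]
      have hgx : g x = crossAlpha (h x) := hca hxV
      have hval : phiC F G (g x) = F (h x 0) := by
        rw [hgx]
        show F (h x 0) + G 0 - F 0 = F (h x 0)
        rw [← hFG]; ring
      rw [hval, hF]
      show ω 1 ⟨(Set.univ, crossAlpha), hgen.1⟩ (fun _ => h x 0) v0 = _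
      rw [hxeq]
      exact form0_arg _ _ _
    · rw [lemmaB hω hgen.2.1 hg hVo hxV hVW hh hcb]
      refine ContinuousMultilinearMap.ext fun v => ?_
      rw [form0_apply, pullbackForm, ContinuousMultilinearMap.compContinuousLinearMap_apply]
      have hgx : g x = crossBeta (h x) := hcb hxV
      have hval : phiC F G (g x) = G (h x 0) := by
        rw [hgx]
        show F 0 + G (h x 0) - F 0 = G (h x 0)
        ring
      rw [hval, hG]
      show ω 1 ⟨(Set.univ, crossBeta), hgen.2.1⟩ (fun _ => h x 0) v0 = _
      rw [hxeq]
      exact form0_arg _ _ _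
  · rw [killOn, Set.indicator_of_notMem hx]
    exact (hω.vanish n W g hg x hx).symm

lemma S0form_add (D : Diffeology' Cross) (F G F' G' : ℝ → ℝ) :
    S0form D (F + F') (G + G') = S0form D F G + S0form D F' G' := by
  funext n p x
  show killOn p.1.1 (fun y => form0 (phiC (F + F') (G + G') (p.1.2 y))) x =
    killOn p.1.1 (fun y => form0 (phiC F G (p.1.2 y))) x +
      killOn p.1.1 (fun y => form0 (phiC F' G' (p.1.2 y))) x
  by_cases hx : x ∈ p.1.1
  · rw [killOn, killOn, killOn, Set.indicator_of_mem hx, Set.indicator_of_mem hx,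
      Set.indicator_of_mem hx]
    refine ContinuousMultilinearMap.ext fun v => ?_
    rw [ContinuousMultilinearMap.add_apply, form0_apply, form0_apply, form0_apply]
    show (F + F') _ + (G + G') _ - (F + F') 0 = _
    simp only [Pi.add_apply, phiC]
    ring
  · rw [killOn, killOn, killOn, Set.indicator_of_notMem hx, Set.indicator_of_notMem hx,
      Set.indicator_of_notMem hx]
    simp

lemma S0form_smul (D : Diffeology' Cross) (c : ℝ) (F G : ℝ → ℝ) :
    S0form D (c • F) (c • G) = c • S0form D F G := by
  funext n p x
  show killOn p.1.1 (fun y => form0 (phiC (c • F) (c • G) (p.1.2 y))) x =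
    c • killOn p.1.1 (fun y => form0 (phiC F G (p.1.2 y))) x
  by_cases hx : x ∈ p.1.1
  · rw [killOn, killOn, Set.indicator_of_mem hx, Set.indicator_of_mem hx]
    refine ContinuousMultilinearMap.ext fun v => ?_
    rw [ContinuousMultilinearMap.smul_apply, form0_apply, form0_apply]
    show (c • F) _ + (c • G) _ - (c • F) 0 = c • (F _ + G _ - F 0)
    simp only [Pi.smul_apply, smul_eq_mul]
    ring
  · rw [killOn, killOn, Set.indicator_of_notMem hx, Set.indicator_of_notMem hx]
    simp

def T0lin {D : Diffeology' Cross}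
    (hgen : D.IsGeneratedBy₂ Set.univ crossAlpha Set.univ crossBeta) :
    ↥(Omega D 0) →ₗ[ℝ] ↥crossPairs where
  toFun ω := ⟨(evalF hgen.1 ω.1, evalG hgen.2.1 ω.1),
    eval_contDiff hgen.1 ω.2, eval_contDiff hgen.2.1 ω.2,
    evalF_zero_eq_evalG_zero hgen.1 hgen.2.1 ω.2⟩
  map_add' a b := by
    apply Subtype.ext
    apply Prod.ext <;> funext t <;> rfl
  map_smul' c a := by
    apply Subtype.ext
    apply Prod.ext <;> funext t <;> rfl

def S0lin {D : Diffeology' Cross}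
    (hgen : D.IsGeneratedBy₂ Set.univ crossAlpha Set.univ crossBeta) :
    ↥crossPairs →ₗ[ℝ] ↥(Omega D 0) where
  toFun p := ⟨S0form D p.1.1 p.1.2, S0form_isDiffForm hgen p.2.1 p.2.2.1 p.2.2.2⟩
  map_add' a b := by
    apply Subtype.ext
    show S0form D (a.1.1 + b.1.1) (a.1.2 + b.1.2) = _
    rw [S0form_add]
    rfl
  map_smul' c a := by
    apply Subtype.ext
    show S0form D (c • a.1.1) (c • a.1.2) = _
    rw [S0form_smul]
    rfl

lemma equiv0 {D : Diffeology' Cross}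
    (hgen : D.IsGeneratedBy₂ Set.univ crossAlpha Set.univ crossBeta) :
    Nonempty (↥(Omega D 0) ≃ₗ[ℝ] ↥crossPairs) := by
  refine ⟨LinearEquiv.ofLinear (T0lin hgen) (S0lin hgen) ?_ ?_⟩
  · apply LinearMap.ext
    intro p
    apply Subtype.ext
    apply Prod.ext
    · exact S0_roundF hgen p.2.2.2
    · exact S0_roundG hgen p.2.2.2
  · apply LinearMap.ext
    intro ω
    apply Subtype.ext
    exact S0_round2 hgen ω.2

end ZeroEquiv
section OneForms

/-! ### Degree 1 -/

def pr1 {n : ℕ} (g : Ev n → Cross) : Ev n → Ev 1 := fun y _ => (g y : ℝ × ℝ).1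

def pr2 {n : ℕ} (g : Ev n → Cross) : Ev n → Ev 1 := fun y _ => (g y : ℝ × ℝ).2

lemma pr1_eqOn_alpha {n : ℕ} {g : Ev n → Cross} {V : Set (Ev n)} {h : Ev n → Ev 1}
    (heq : Set.EqOn g (crossAlpha ∘ h) V) : Set.EqOn (pr1 g) h V := fun y hy => by
  funext j
  rw [Subsingleton.elim j 0]
  show ((g y : ℝ × ℝ)).1 = h y 0
  rw [heq hy]
  rfl

lemma pr2_eqOn_alpha {n : ℕ} {g : Ev n → Cross} {V : Set (Ev n)} {h : Ev n → Ev 1}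
    (heq : Set.EqOn g (crossAlpha ∘ h) V) :
    Set.EqOn (pr2 g) (fun _ => (0 : Ev 1)) V := fun y hy => by
  funext j
  show ((g y : ℝ × ℝ)).2 = 0
  rw [heq hy]
  rfl

lemma pr2_eqOn_beta {n : ℕ} {g : Ev n → Cross} {V : Set (Ev n)} {h : Ev n → Ev 1}
    (heq : Set.EqOn g (crossBeta ∘ h) V) : Set.EqOn (pr2 g) h V := fun y hy => by
  funext j
  rw [Subsingleton.elim j 0]
  show ((g y : ℝ × ℝ)).2 = h y 0
  rw [heq hy]
  rfl

lemma pr1_eqOn_beta {n : ℕ} {g : Ev n → Cross} {V : Set (Ev n)} {h : Ev n → Ev 1}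
    (heq : Set.EqOn g (crossBeta ∘ h) V) :
    Set.EqOn (pr1 g) (fun _ => (0 : Ev 1)) V := fun y hy => by
  funext j
  show ((g y : ℝ × ℝ)).1 = 0
  rw [heq hy]
  rfl

lemma pullbackForm_congr_nhds {n k : ℕ} {q q' : Ev n → Ev 1} {x : Ev n}
    (hq : q =ᶠ[nhds x] q') (μ : RawForm 1 k) :
    pullbackForm q μ x = pullbackForm q' μ x := by
  rw [pullbackForm, pullbackForm, hq.eq_of_nhds, hq.fderiv_eq]

lemma pullbackForm_locally_const {n : ℕ} {q : Ev n → Ev 1} {x : Ev n} {c : Ev 1}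
    (hq : q =ᶠ[nhds x] fun _ => c) (μ : RawForm 1 1) : pullbackForm q μ x = 0 := by
  have h2 : fderiv ℝ q x = 0 := by
    rw [hq.fderiv_eq]
    exact fderiv_const_apply c
  refine ContinuousMultilinearMap.ext fun v => ?_
  rw [pullbackForm, ContinuousMultilinearMap.compContinuousLinearMap_apply, h2]
  have : (fun i : Fin 1 => (0 : Ev n →L[ℝ] Ev 1) (v i)) = fun _ => 0 := by
    funext i; simp
  rw [this]
  rw [(μ (q x)).map_coord_zero (0 : Fin 1) rfl]
  rfl

lemma pullbackForm_repr {n : ℕ} (h : Ev n → Ev 1) (μ : RawForm 1 1) :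
    pullbackForm h μ = fun y => (continuousMultilinearCurryFin1 ℝ (Ev n) ℝ).symm
      (((continuousMultilinearCurryFin1 ℝ (Ev 1) ℝ) (μ (h y))).comp (fderiv ℝ h y)) := by
  funext y
  refine ContinuousMultilinearMap.ext fun v => ?_
  rw [pullbackForm, ContinuousMultilinearMap.compContinuousLinearMap_apply]
  rw [continuousMultilinearCurryFin1_symm_apply]
  rw [ContinuousLinearMap.comp_apply, continuousMultilinearCurryFin1_apply]
  congr 1
  funext i
  rw [Subsingleton.elim i 0]
  rw [show (0 : Fin 1) = Fin.last 0 from rfl, Fin.snoc_last]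

lemma contDiffOn_pullbackForm {n : ℕ} {V : Set (Ev n)} (hV : IsOpen V)
    {h : Ev n → Ev 1} (hh : ContDiffOn ℝ (⊤ : ℕ∞) h V) {μ : RawForm 1 1}
    (hμ : ContDiff ℝ (⊤ : ℕ∞) μ) : ContDiffOn ℝ (⊤ : ℕ∞) (pullbackForm h μ) V := by
  rw [pullbackForm_repr]
  have h1 : ContDiffOn ℝ (⊤ : ℕ∞) (fun y => fderiv ℝ h y) V := hh.fderiv_of_isOpen hV (by simp)
  have h2 : ContDiffOn ℝ (⊤ : ℕ∞)
      (fun y => (continuousMultilinearCurryFin1 ℝ (Ev 1) ℝ) (μ (h y))) V :=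
    ((continuousMultilinearCurryFin1 ℝ (Ev 1) ℝ).contDiff.comp hμ).comp_contDiffOn hh
  have h3 := h2.clm_comp h1
  exact ((continuousMultilinearCurryFin1 ℝ (Ev n) ℝ).symm.contDiff).comp_contDiffOn h3

lemma pullbackForm_chain {n m : ℕ} {q : Ev n → Ev 1} {h₀ : Ev m → Ev n} {x : Ev m}
    (hq : DifferentiableAt ℝ q (h₀ x)) (hh₀ : DifferentiableAt ℝ h₀ x) (μ : RawForm 1 1) :
    pullbackForm (q ∘ h₀) μ x =
      (pullbackForm q μ (h₀ x)).compContinuousLinearMap (fun _ => fderiv ℝ h₀ x) := by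
  refine ContinuousMultilinearMap.ext fun v => ?_
  rw [pullbackForm, pullbackForm,
    ContinuousMultilinearMap.compContinuousLinearMap_apply,
    ContinuousMultilinearMap.compContinuousLinearMap_apply,
    ContinuousMultilinearMap.compContinuousLinearMap_apply]
  rw [fderiv_comp x hq hh₀]
  rfl

/-- Differentiability of the two coordinate projections of a plot. -/
lemma pr_differentiableAt {D : Diffeology' Cross}
    (hgen : D.IsGeneratedBy₂ Set.univ crossAlpha Set.univ crossBeta)
    {n : ℕ} {W : Set (Ev n)} {g : Ev n → Cross} (hg : D.IsPlot W g)
    {x : Ev n} (hx : x ∈ W) :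
    DifferentiableAt ℝ (pr1 g) x ∧ DifferentiableAt ℝ (pr2 g) x := by
  obtain ⟨V, hVo, hxV, hVW, h, hh, hcase⟩ := plot_locallyFactors hgen hg x hx
  have hhd : DifferentiableAt ℝ h x :=
    (hh.contDiffAt (hVo.mem_nhds hxV)).differentiableAt (by simp)
  rcases hcase with hca | hcb
  · constructor
    · exact hhd.congr_of_eventuallyEq
        (Filter.eventuallyEq_of_mem (hVo.mem_nhds hxV) (pr1_eqOn_alpha hca))
    · exact (differentiableAt_const (0 : Ev 1)).congr_of_eventuallyEq
        (Filter.eventuallyEq_of_mem (hVo.mem_nhds hxV) (pr2_eqOn_alpha hca))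
  · constructor
    · exact (differentiableAt_const (0 : Ev 1)).congr_of_eventuallyEq
        (Filter.eventuallyEq_of_mem (hVo.mem_nhds hxV) (pr1_eqOn_beta hcb))
    · exact hhd.congr_of_eventuallyEq
        (Filter.eventuallyEq_of_mem (hVo.mem_nhds hxV) (pr2_eqOn_beta hcb))

def S1raw {n : ℕ} (g : Ev n → Cross) (μ ν : RawForm 1 1) : RawForm n 1 :=
  pullbackForm (pr1 g) μ + pullbackForm (pr2 g) ν

/-- Pointwise value of `S1raw` in the α-case. -/
lemma S1raw_eq_alpha {n : ℕ} {g : Ev n → Cross} {V : Set (Ev n)} (hVo : IsOpen V)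
    {h : Ev n → Ev 1} (heq : Set.EqOn g (crossAlpha ∘ h) V) (μ ν : RawForm 1 1)
    {x : Ev n} (hxV : x ∈ V) : S1raw g μ ν x = pullbackForm h μ x := by
  have e1 : pr1 g =ᶠ[nhds x] h :=
    Filter.eventuallyEq_of_mem (hVo.mem_nhds hxV) (pr1_eqOn_alpha heq)
  have e2 : pr2 g =ᶠ[nhds x] fun _ => (0 : Ev 1) :=
    Filter.eventuallyEq_of_mem (hVo.mem_nhds hxV) (pr2_eqOn_alpha heq)
  show pullbackForm (pr1 g) μ x + pullbackForm (pr2 g) ν x = pullbackForm h μ x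
  rw [pullbackForm_congr_nhds e1, pullbackForm_locally_const e2, add_zero]

lemma S1raw_eq_beta {n : ℕ} {g : Ev n → Cross} {V : Set (Ev n)} (hVo : IsOpen V)
    {h : Ev n → Ev 1} (heq : Set.EqOn g (crossBeta ∘ h) V) (μ ν : RawForm 1 1)
    {x : Ev n} (hxV : x ∈ V) : S1raw g μ ν x = pullbackForm h ν x := by
  have e1 : pr2 g =ᶠ[nhds x] h :=
    Filter.eventuallyEq_of_mem (hVo.mem_nhds hxV) (pr2_eqOn_beta heq)
  have e2 : pr1 g =ᶠ[nhds x] fun _ => (0 : Ev 1) :=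
    Filter.eventuallyEq_of_mem (hVo.mem_nhds hxV) (pr1_eqOn_beta heq)
  show pullbackForm (pr1 g) μ x + pullbackForm (pr2 g) ν x = pullbackForm h ν x
  rw [pullbackForm_congr_nhds e1, pullbackForm_locally_const e2, zero_add]

def S1form (D : Diffeology' Cross) (μ ν : RawForm 1 1) : DiffFormData D 1 :=
  fun _ p => killOn p.1.1 (S1raw p.1.2 μ ν)

end OneForms
section OneEquiv

lemma S1form_isDiffForm {D : Diffeology' Cross}
    (hgen : D.IsGeneratedBy₂ Set.univ crossAlpha Set.univ crossBeta)
    {μ ν : RawForm 1 1} (hμ : ContDiff ℝ (⊤ : ℕ∞) μ) (hν : ContDiff ℝ (⊤ : ℕ∞) ν) :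
    IsDiffForm (S1form D μ ν) := by
  constructor
  · intro n U f hf
    have hsm : ContDiffOn ℝ (⊤ : ℕ∞) (S1raw f μ ν) U := by
      intro x hx
      obtain ⟨V, hVo, hxV, hVU, h, hh, hcase⟩ := plot_locallyFactors hgen hf x hx
      rcases hcase with hca | hcb
      · exact (((contDiffOn_pullbackForm hVo hh hμ).contDiffAt
          (hVo.mem_nhds hxV)).congr_of_eventuallyEq
          (Filter.eventuallyEq_of_mem (hVo.mem_nhds hxV)
            (fun y hy => S1raw_eq_alpha hVo hca μ ν hy))).contDiffWithinAt
      · exact (((contDiffOn_pullbackForm hVo hh hν).contDiffAt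
          (hVo.mem_nhds hxV)).congr_of_eventuallyEq
          (Filter.eventuallyEq_of_mem (hVo.mem_nhds hxV)
            (fun y hy => S1raw_eq_beta hVo hcb μ ν hy))).contDiffWithinAt
    refine hsm.congr fun y hy => ?_
    show (Set.indicator U (S1raw f μ ν)) y = S1raw f μ ν y
    exact Set.indicator_of_mem hy _
  · intro n U f hf x v i j hv hij
    exact absurd (Subsingleton.elim i j) hij
  · intro n U f hf x hx
    show (Set.indicator U (S1raw f μ ν)) x = 0
    exact Set.indicator_of_notMem hx _
  · intro m n U f hf V h hV hh hmap x hx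
    obtain ⟨hd1, hd2⟩ := pr_differentiableAt hgen hf (hmap hx)
    have hh0d : DifferentiableAt ℝ h x :=
      (hh.contDiffAt (hV.mem_nhds hx)).differentiableAt (by simp)
    show (Set.indicator V (S1raw (f ∘ h) μ ν)) x =
      pullbackForm h (killOn U (S1raw f μ ν)) x
    rw [Set.indicator_of_mem hx]
    have hk : pullbackForm h (killOn U (S1raw f μ ν)) x =
        (S1raw f μ ν (h x)).compContinuousLinearMap (fun _ => fderiv ℝ h x) := by
      rw [pullbackForm, killOn, Set.indicator_of_mem (hmap hx)]
    rw [hk]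
    show pullbackForm (pr1 (f ∘ h)) μ x + pullbackForm (pr2 (f ∘ h)) ν x = _
    have hp1 : pr1 (f ∘ h) = (pr1 f) ∘ h := rfl
    have hp2 : pr2 (f ∘ h) = (pr2 f) ∘ h := rfl
    rw [hp1, hp2, pullbackForm_chain hd1 hh0d, pullbackForm_chain hd2 hh0d]
    refine ContinuousMultilinearMap.ext fun v => ?_
    simp [S1raw, ContinuousMultilinearMap.compContinuousLinearMap_apply,
      ContinuousMultilinearMap.add_apply, Pi.add_apply]

lemma pr1_crossAlpha : pr1 crossAlpha = id := by
  funext y j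
  rw [Subsingleton.elim j 0]
  rfl

lemma pr2_crossBeta : pr2 crossBeta = id := by
  funext y j
  rw [Subsingleton.elim j 0]
  rfl

lemma pullbackForm_id {n k : ℕ} (μ : RawForm n k) : pullbackForm id μ = μ := by
  funext x
  refine ContinuousMultilinearMap.ext fun v => ?_
  rw [pullbackForm, ContinuousMultilinearMap.compContinuousLinearMap_apply, fderiv_id]
  rfl

lemma S1_round1α {D : Diffeology' Cross} (hα : D.IsPlot Set.univ crossAlpha)
    (μ ν : RawForm 1 1) : S1form D μ ν 1 ⟨(Set.univ, crossAlpha), hα⟩ = μ := by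
  funext x
  show (Set.indicator Set.univ (S1raw crossAlpha μ ν)) x = μ x
  rw [Set.indicator_of_mem (Set.mem_univ x)]
  show pullbackForm (pr1 crossAlpha) μ x + pullbackForm (pr2 crossAlpha) ν x = μ x
  have h2 : pr2 crossAlpha = fun _ => (0 : Ev 1) := rfl
  rw [pr1_crossAlpha, pullbackForm_id, h2,
    pullbackForm_locally_const Filter.EventuallyEq.rfl, add_zero]

lemma S1_round1β {D : Diffeology' Cross} (hβ : D.IsPlot Set.univ crossBeta)
    (μ ν : RawForm 1 1) : S1form D μ ν 1 ⟨(Set.univ, crossBeta), hβ⟩ = ν := by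
  funext x
  show (Set.indicator Set.univ (S1raw crossBeta μ ν)) x = ν x
  rw [Set.indicator_of_mem (Set.mem_univ x)]
  show pullbackForm (pr1 crossBeta) μ x + pullbackForm (pr2 crossBeta) ν x = ν x
  have h1 : pr1 crossBeta = fun _ => (0 : Ev 1) := rfl
  rw [pr2_crossBeta, pullbackForm_id, h1,
    pullbackForm_locally_const Filter.EventuallyEq.rfl, zero_add]

lemma S1_round2 {D : Diffeology' Cross}
    (hgen : D.IsGeneratedBy₂ Set.univ crossAlpha Set.univ crossBeta)
    {ω : DiffFormData D 1} (hω : IsDiffForm ω) :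
    S1form D (ω 1 ⟨(Set.univ, crossAlpha), hgen.1⟩)
      (ω 1 ⟨(Set.univ, crossBeta), hgen.2.1⟩) = ω := by
  funext n p
  obtain ⟨⟨W, g⟩, hg⟩ := p
  funext x
  show (Set.indicator W (S1raw g _ _)) x = ω n ⟨(W, g), hg⟩ x
  by_cases hx : x ∈ W
  · rw [Set.indicator_of_mem hx]
    obtain ⟨V, hVo, hxV, hVW, h, hh, hcase⟩ := plot_locallyFactors hgen hg x hx
    rcases hcase with hca | hcb
    · rw [S1raw_eq_alpha hVo hca _ _ hxV, lemmaB hω hgen.1 hg hVo hxV hVW hh hca]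
    · rw [S1raw_eq_beta hVo hcb _ _ hxV, lemmaB hω hgen.2.1 hg hVo hxV hVW hh hcb]
  · rw [Set.indicator_of_notMem hx]
    exact (hω.vanish n W g hg x hx).symm

lemma S1form_add (D : Diffeology' Cross) (μ ν μ' ν' : RawForm 1 1) :
    S1form D (μ + μ') (ν + ν') = S1form D μ ν + S1form D μ' ν' := by
  have hraw : ∀ {n : ℕ} (g : Ev n → Cross),
      S1raw g (μ + μ') (ν + ν') = S1raw g μ ν + S1raw g μ' ν' := by
    intro n g
    show pullbackForm (pr1 g) (μ + μ') + pullbackForm (pr2 g) (ν + ν') = _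
    rw [pullbackForm_add, pullbackForm_add, add_add_add_comm]
    rfl
  funext n p x
  show (Set.indicator p.1.1 (S1raw p.1.2 (μ + μ') (ν + ν'))) x =
    (Set.indicator p.1.1 (S1raw p.1.2 μ ν)) x + (Set.indicator p.1.1 (S1raw p.1.2 μ' ν')) x
  by_cases hx : x ∈ p.1.1
  · rw [Set.indicator_of_mem hx, Set.indicator_of_mem hx, Set.indicator_of_mem hx, hraw]
    rfl
  · rw [Set.indicator_of_notMem hx, Set.indicator_of_notMem hx,
      Set.indicator_of_notMem hx, add_zero]

lemma S1form_smul (D : Diffeology' Cross) (c : ℝ) (μ ν : RawForm 1 1) :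
    S1form D (c • μ) (c • ν) = c • S1form D μ ν := by
  have hraw : ∀ {n : ℕ} (g : Ev n → Cross),
      S1raw g (c • μ) (c • ν) = c • S1raw g μ ν := by
    intro n g
    show pullbackForm (pr1 g) (c • μ) + pullbackForm (pr2 g) (c • ν) = _
    rw [pullbackForm_smul, pullbackForm_smul, ← smul_add]
    rfl
  funext n p x
  show (Set.indicator p.1.1 (S1raw p.1.2 (c • μ) (c • ν))) x =
    c • (Set.indicator p.1.1 (S1raw p.1.2 μ ν)) x
  by_cases hx : x ∈ p.1.1
  · rw [Set.indicator_of_mem hx, Set.indicator_of_mem hx, hraw]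
    rfl
  · rw [Set.indicator_of_notMem hx, Set.indicator_of_notMem hx, smul_zero]

def T1lin {D : Diffeology' Cross}
    (hgen : D.IsGeneratedBy₂ Set.univ crossAlpha Set.univ crossBeta) :
    ↥(Omega D 1) →ₗ[ℝ] ↥(smoothForms 1 1) × ↥(smoothForms 1 1) where
  toFun ω := (⟨ω.1 1 ⟨(Set.univ, crossAlpha), hgen.1⟩,
      by rw [← contDiffOn_univ]; exact (ω.2 : IsDiffForm ω.1).smooth 1 _ _ hgen.1,
      (ω.2 : IsDiffForm ω.1).alternating 1 _ _ hgen.1⟩,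
    ⟨ω.1 1 ⟨(Set.univ, crossBeta), hgen.2.1⟩,
      by rw [← contDiffOn_univ]; exact (ω.2 : IsDiffForm ω.1).smooth 1 _ _ hgen.2.1,
      (ω.2 : IsDiffForm ω.1).alternating 1 _ _ hgen.2.1⟩)
  map_add' a b := Prod.ext (Subtype.ext rfl) (Subtype.ext rfl)
  map_smul' c a := Prod.ext (Subtype.ext rfl) (Subtype.ext rfl)

def S1lin {D : Diffeology' Cross}
    (hgen : D.IsGeneratedBy₂ Set.univ crossAlpha Set.univ crossBeta) :
    ↥(smoothForms 1 1) × ↥(smoothForms 1 1) →ₗ[ℝ] ↥(Omega D 1) where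
  toFun p := ⟨S1form D p.1.1 p.2.1, S1form_isDiffForm hgen p.1.2.1 p.2.2.1⟩
  map_add' a b := by
    apply Subtype.ext
    show S1form D (a.1.1 + b.1.1) (a.2.1 + b.2.1) = _
    rw [S1form_add]
    rfl
  map_smul' c a := by
    apply Subtype.ext
    show S1form D (c • a.1.1) (c • a.2.1) = _
    rw [S1form_smul]
    rfl

lemma equiv1 {D : Diffeology' Cross}
    (hgen : D.IsGeneratedBy₂ Set.univ crossAlpha Set.univ crossBeta) :
    Nonempty (↥(Omega D 1) ≃ₗ[ℝ] ↥(smoothForms 1 1) × ↥(smoothForms 1 1)) := by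
  refine ⟨LinearEquiv.ofLinear (T1lin hgen) (S1lin hgen) ?_ ?_⟩
  · apply LinearMap.ext
    intro p
    apply Prod.ext
    · exact Subtype.ext (S1_round1α hgen.1 p.1.1 p.2.1)
    · exact Subtype.ext (S1_round1β hgen.2.1 p.1.1 p.2.1)
  · apply LinearMap.ext
    intro ω
    exact Subtype.ext (S1_round2 hgen ω.2)

end OneEquiv
/-- For the cross with the diffeology generated by the two axis inclusions:
`Ω^k(X) = 0` for `k ≥ 2`, `Ω^0(X)` is isomorphic to the space of pairs of smooth functions
`(F, G)` with `F(0) = G(0)`, and `Ω^1(X)` is isomorphic to `Ω^1(ℝ) ⊕ Ω^1(ℝ)`. -/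
theorem cross_forms {D : Diffeology' Cross}
    (hgen : D.IsGeneratedBy₂ Set.univ crossAlpha Set.univ crossBeta) :
    (∀ k : ℕ, 2 ≤ k → ∀ ω ∈ Omega D k, ω = 0) ∧
    Nonempty (↥(Omega D 0) ≃ₗ[ℝ] ↥crossPairs) ∧
    Nonempty (↥(Omega D 1) ≃ₗ[ℝ] (↥(smoothForms 1 1) × ↥(smoothForms 1 1))) :=
  ⟨fun _ hk ω hω => omega_high_eq_zero hgen hk ω hω, equiv0 hgen, equiv1 hgen⟩
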